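/- Let W be the closure in 𝔬̂ of the image of the unit group 𝔬^* under the diagonal embedding 𝔬 → 𝔬̂. Then W = { (r_m)_m ∈ 𝔬̂ : for every m ∈ 𝔬^×, r_m lies in the image of 𝔬^* under the quotient map 𝔬 → 𝔬/(m) }. -/

import Mathlib

/-! The profinite completion `R̂` of an integral domain `R` (not a field, with all
nonzero principal ideals of finite index) is a compact topological space. -/

/-- The index set `R^× = R \ {0}`. -/
abbrev Rx (R : Type*) [CommRing R] := {m : R // m ≠ 0}

/-- Each finite quotient `R/(m)` carries the discrete topology. -/
instance quotTop (R : Type*) [CommRing R] (m : R) :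
    TopologicalSpace (R ⧸ Ideal.span {m}) := ⊥

theorem span_mul_le (R : Type*) [CommRing R] (l m : R) :
    Ideal.span {l * m} ≤ Ideal.span {m} :=
  Ideal.span_singleton_le_span_singleton.mpr (dvd_mul_left m l)

/-- The profinite completion `R̂` of `R`, as a subring of the product of the
quotients `R/(m)`, `m ∈ R^×`, consisting of the compatible families. -/
def Rhat (R : Type*) [CommRing R] [IsDomain R] :
    Subring (∀ m : Rx R, R ⧸ Ideal.span {(m : R)}) where
  carrier := {x | ∀ l m : Rx R,
    Ideal.Quotient.factor (span_mul_le R l m)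
      (x ⟨(l : R) * m, mul_ne_zero l.2 m.2⟩) = x m}
  mul_mem' {a b} ha hb := by
    intro l m
    rw [Pi.mul_apply, Pi.mul_apply, map_mul, ha l m, hb l m]
  one_mem' := by
    intro l m
    rw [Pi.one_apply, Pi.one_apply, map_one]
  add_mem' {a b} ha hb := by
    intro l m
    rw [Pi.add_apply, Pi.add_apply, map_add, ha l m, hb l m]
  zero_mem' := by
    intro l m
    rw [Pi.zero_apply, Pi.zero_apply, map_zero]
  neg_mem' {a} ha := by
    intro l m
    rw [Pi.neg_apply, Pi.neg_apply, map_neg, ha l m]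

/-- The diagonal map `R → R̂`, `r ↦ (r + (m))_m`, as a ring homomorphism. -/
def diagHom (R : Type*) [CommRing R] [IsDomain R] : R →+* Rhat R :=
  (Pi.ringHom fun m : Rx R => Ideal.Quotient.mk (Ideal.span {(m : R)})).codRestrict
    (Rhat R) (fun r l m => by
      exact rfl)
open NumberField

/-- The closure `W` in `𝔬̂` of the image of the unit group `𝔬^*` under the diagonal
embedding. -/
def Wclosure (K : Type*) [Field K] [NumberField K] : Set (Rhat (𝓞 K)) :=
  closure (Set.range fun u : (𝓞 K)ˣ => diagHom (𝓞 K) (u : 𝓞 K))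

theorem Rhat.apply_congr {R : Type*} [CommRing R] [IsDomain R] (x : Rhat R)
    {a b : Rx R} (h : a = b) (r : R)
    (ha : x.1 a = Ideal.Quotient.mk (Ideal.span {(a : R)}) r) :
    x.1 b = Ideal.Quotient.mk (Ideal.span {(b : R)}) r := by
  subst h; exact ha

/-- `W` equals the set of compatible families `(r_m)_m ∈ 𝔬̂` such that for
every `m ∈ 𝔬^×` the component `r_m` lies in the image of `𝔬^*` under the quotient map
`𝔬 → 𝔬/(m)`. -/
theorem Wclosure_eq (K : Type*) [Field K] [NumberField K] :
    Wclosure K = {x : Rhat (𝓞 K) | ∀ m : Rx (𝓞 K), ∃ u : (𝓞 K)ˣ,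
      x.1 m = Ideal.Quotient.mk (Ideal.span {(m : 𝓞 K)}) (u : 𝓞 K)} := by
  ext x
  constructor
  · intro hx m
    haveI : DiscreteTopology ((𝓞 K) ⧸ Ideal.span {(m : 𝓞 K)}) := ⟨rfl⟩
    have hcont : Continuous fun y : Rhat (𝓞 K) => y.1 m :=
      (continuous_apply m).comp continuous_subtype_val
    have hopen : IsOpen {y : Rhat (𝓞 K) | y.1 m = x.1 m} :=
      (isOpen_discrete {x.1 m}).preimage hcont
    obtain ⟨y, hy1, u, rfl⟩ := mem_closure_iff.mp hx _ hopen rfl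
    exact ⟨u, hy1.symm⟩
  · intro hx
    classical
    rw [Wclosure, mem_closure_iff]
    intro o ho hxo
    obtain ⟨V, hV, rfl⟩ := isOpen_induced_iff.mp ho
    obtain ⟨I, U, hU, hpi⟩ := isOpen_pi_iff.mp hV x.1 hxo
    have hm0 : (∏ i ∈ I, (i : 𝓞 K)) ≠ 0 :=
      Finset.prod_ne_zero_iff.mpr fun i _ => i.2
    obtain ⟨u, hu⟩ := hx ⟨∏ i ∈ I, (i : 𝓞 K), hm0⟩
    refine ⟨diagHom (𝓞 K) (u : 𝓞 K), hpi ?_, ⟨u, rfl⟩⟩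
    intro i hi
    have hl0 : (∏ j ∈ I.erase i, (j : 𝓞 K)) ≠ 0 :=
      Finset.prod_ne_zero_iff.mpr fun j _ => j.2
    have hc := x.2 ⟨∏ j ∈ I.erase i, (j : 𝓞 K), hl0⟩ i
    have hprod : (∏ j ∈ I.erase i, (j : 𝓞 K)) * (i : 𝓞 K) = ∏ j ∈ I, (j : 𝓞 K) :=
      Finset.prod_erase_mul _ _ hi
    have hidx : (⟨∏ j ∈ I, (j : 𝓞 K), hm0⟩ : Rx (𝓞 K)) =
        ⟨(∏ j ∈ I.erase i, (j : 𝓞 K)) * (i : 𝓞 K), mul_ne_zero hl0 i.2⟩ :=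
      Subtype.ext hprod.symm
    have hb := Rhat.apply_congr x hidx ((u : (𝓞 K)ˣ) : 𝓞 K) hu
    rw [hb, Ideal.Quotient.factor_mk] at hc
    have : (diagHom (𝓞 K) (u : 𝓞 K)).1 i = x.1 i := hc
    rw [this]
    exact (hU i hi).2
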